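/- arXiv:2108.04056 — 5 statements merged into one kernel-verified Lean document; each statement's English description precedes it below -/
import Mathlib

section
/- Let f : [0,∞) → ℝ be a continuous bounded function. If the function g(t) := exp(∫₀ᵗ f(s) ds) is integrable on [0,∞), then ∫₀ᵗ f(s) ds → -∞ as t → ∞. -/
/-!
Write `F t = ∫₀ᵗ f`. Since `f` is bounded by `K`, `F` is `K`-Lipschitz, so whenever `F t > b`
the function `exp ∘ F` stays above `exp (b - K)` on `[t, t + 1]`. If `F t > b` for arbitrarily
large `t`, the integrals of `exp ∘ F` over the windows `[t, t + 1]` would not tend to `0`,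
contradicting its integrability.
-/

open MeasureTheory Filter Topology Set
open scoped NNReal Interval

theorem uIcc_subset_Ici_of_le {a x y : ℝ} (hx : a ≤ x) (hy : a ≤ y) : [[x, y]] ⊆ Ici a :=
  fun _ hz => (le_min hx hy).trans hz.1

theorem tendsto_intervalIntegral_add_const_atTop {E : Type*} [NormedAddCommGroup E]
    [NormedSpace ℝ E] [CompleteSpace E] {u : ℝ → E} {a : ℝ} (hu : IntegrableOn u (Ici a))
    (c : ℝ) : Tendsto (fun t => ∫ s in t..t + c, u s) atTop (𝓝 0) := by
  have hlim := intervalIntegral_tendsto_integral_Ioi a (hu.mono_set Ioi_subset_Ici_self)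
    tendsto_id
  have hdiff := (hlim.comp (tendsto_atTop_add_const_right atTop c tendsto_id)).sub hlim
  rw [sub_self] at hdiff
  have hii : ∀ x ≥ a, IntervalIntegrable u volume a x := fun x hx =>
    (hu.mono_set (uIcc_subset_Ici_of_le le_rfl hx)).intervalIntegrable
  refine hdiff.congr' ?_
  filter_upwards [eventually_ge_atTop a, eventually_ge_atTop (a - c)] with t ht htc
  exact intervalIntegral.integral_interval_sub_left (hii (t + c) (by linarith)) (hii t ht)

theorem lipschitzOnWith_intervalIntegral {E : Type*} [NormedAddCommGroup E]
    [NormedSpace ℝ E] {f : ℝ → E} {a : ℝ} {K : ℝ≥0} (hf : LocallyIntegrableOn f (Ici a))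
    (hbd : ∀ t ≥ a, ‖f t‖ ≤ K) : LipschitzOnWith K (fun t => ∫ s in a..t, f s) (Ici a) := by
  have hii : ∀ x ∈ Ici a, IntervalIntegrable f volume a x := fun x hx =>
    (hf.integrableOn_compact_subset (uIcc_subset_Ici_of_le le_rfl hx)
      isCompact_uIcc).intervalIntegrable
  refine LipschitzOnWith.of_dist_le_mul fun x hx y hy => ?_
  rw [dist_eq_norm, Real.dist_eq,
    intervalIntegral.integral_interval_sub_left (hii x hx) (hii y hy)]
  exact intervalIntegral.norm_integral_le_of_norm_le_const fun s hs =>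
    hbd s ((le_min hy hx).trans hs.1.le)

theorem tendsto_atBot_of_lipschitzOnWith_of_integrableOn_exp {F : ℝ → ℝ} {a : ℝ}
    {K : ℝ≥0} (hF : LipschitzOnWith K F (Ici a))
    (hint : IntegrableOn (fun t => Real.exp (F t)) (Ici a)) :
    Tendsto F atTop atBot := by
  rw [tendsto_atBot]
  intro b
  have hsmall : ∀ᶠ t in atTop, ∫ s in t..t + 1, Real.exp (F s) < Real.exp (b - K) :=
    (tendsto_intervalIntegral_add_const_atTop hint 1).eventually
      (gt_mem_nhds (Real.exp_pos _))
  filter_upwards [hsmall, eventually_ge_atTop a] with t hsmall_t ht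
  by_contra! hbt
  have hwindow : ∀ s ∈ Icc t (t + 1), b - K ≤ F s := by
    intro s hs
    have hlip := hF.dist_le_mul s (ht.trans hs.1) t ht
    rw [Real.dist_eq, Real.dist_eq, abs_of_nonneg (sub_nonneg.mpr hs.1)] at hlip
    have hK : (K : ℝ) * (s - t) ≤ K := mul_le_of_le_one_right K.2 (by linarith [hs.2])
    linarith [neg_abs_le (F s - F t)]
  have hii : IntervalIntegrable (fun s => Real.exp (F s)) volume t (t + 1) :=
    (hint.mono_set (uIcc_subset_Ici_of_le ht (by linarith : a ≤ t + 1))).intervalIntegrable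
  have hlarge : Real.exp (b - K) ≤ ∫ s in t..t + 1, Real.exp (F s) := by
    calc Real.exp (b - K) = ∫ _ in t..t + 1, Real.exp (b - K) := by simp
      _ ≤ ∫ s in t..t + 1, Real.exp (F s) :=
        intervalIntegral.integral_mono_on (by linarith) intervalIntegrable_const hii
          fun s hs => Real.exp_le_exp.mpr (hwindow s hs)
  linarith

theorem surface_gravity_integral_diverges_general
    (f : ℝ → ℝ) (K : ℝ)
    (hcont : ContinuousOn f (Set.Ici 0))
    (hbd : ∀ t ≥ (0:ℝ), |f t| ≤ K)
    (hint : IntegrableOn (fun t => Real.exp (∫ s in (0:ℝ)..t, f s)) (Set.Ici 0)) :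
    Tendsto (fun t => ∫ s in (0:ℝ)..t, f s) atTop atBot :=
  tendsto_atBot_of_lipschitzOnWith_of_integrableOn_exp
    (lipschitzOnWith_intervalIntegral (hcont.locallyIntegrableOn measurableSet_Ici)
      fun t ht => (hbd t ht).trans (Real.le_coe_toNNReal K)) hint

theorem surface_gravity_integral_diverges
    (f : ℝ → ℝ) (K : ℝ) (hK : 0 < K)
    (hcont : ContinuousOn f (Set.Ici 0))
    (hbd : ∀ t ≥ (0:ℝ), |f t| ≤ K)
    (hint : IntegrableOn (fun t => Real.exp (∫ s in (0:ℝ)..t, f s)) (Set.Ici 0)) :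
    Tendsto (fun t => ∫ s in (0:ℝ)..t, f s) atTop atBot :=
  surface_gravity_integral_diverges_general f K hcont hbd hint
end

section
/- Let g : [0,∞) → (0,∞) be a continuous positive integrable function. Then for almost every x > 0 (with respect to Lebesgue measure), g(nx) → 0 as n → ∞ over the natural numbers. -/
/-!
Fix `ε > 0` and let `E = {t ≥ 0 | ε ≤ |g t|}`, a set of finite measure. For `x ∈ (a, 2a)` the
condition `n x ∈ E` forces `n x ∈ (n a, 2 n a)`, and the substitution `t = n x` gives
`|{x ∈ (a, 2a) | n x ∈ E}| = |E ∩ (n a, 2 n a)| / n`. A point `t` lies in `(n a, 2 n a)` for at most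
`m + 1` indices `n > m = ⌊t / 2a⌋`, so `∑ₙ |E ∩ (n a, 2 n a)| / n ≤ |E| < ∞`, and Borel–Cantelli
shows that almost every `x ∈ (a, 2a)` has `|g (n x)| < ε` for all large `n`. Countably many `a` and
`ε` suffice.
-/

open MeasureTheory Filter Set

open scoped ENNReal

lemma tsum_ofReal_inv_mul_indicator_Ioo_le_one {a : ℝ} (ha : 0 < a) (t : ℝ) :
    ∑' n : ℕ, ENNReal.ofReal (n : ℝ)⁻¹ * (Ioo (n * a) (n * (2 * a))).indicator 1 t ≤ 1 := by
  set m := ⌊t / (2 * a)⌋₊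
  have hsupp : ∀ n ∉ Finset.Ioc m (2 * m + 1),
      ENNReal.ofReal (n : ℝ)⁻¹ * (Ioo (n * a) (n * (2 * a))).indicator 1 t = 0 := by
    intro n hn
    rw [indicator_of_notMem, mul_zero]
    rintro ⟨hlo, hhi⟩
    have ht : 0 ≤ t := (by positivity : (0 : ℝ) ≤ n * a).trans hlo.le
    have hm : t < (m + 1) * (2 * a) := (div_lt_iff₀ (by positivity)).1 (Nat.lt_floor_add_one _)
    have hn_lt : (n : ℝ) < 2 * m + 2 := lt_of_mul_lt_mul_right (by linarith) ha.le
    have hn_lt' : n < 2 * m + 2 := by exact_mod_cast hn_lt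
    refine hn (Finset.mem_Ioc.2 ⟨(Nat.floor_lt (by positivity)).2 ?_, by omega⟩)
    rwa [div_lt_iff₀ (by positivity)]
  rw [tsum_eq_sum hsupp]
  calc _ ≤ (Finset.Ioc m (2 * m + 1)).card • ENNReal.ofReal ((m : ℝ) + 1)⁻¹ := by
        refine Finset.sum_le_card_nsmul _ _ _ fun n hn => ?_
        have hmn : (m : ℝ) + 1 ≤ n := by exact_mod_cast (Finset.mem_Ioc.1 hn).1
        calc _ ≤ ENNReal.ofReal (n : ℝ)⁻¹ * 1 := by gcongr; exact indicator_le_self' (by simp) t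
          _ ≤ _ := by rw [mul_one]; gcongr
    _ = 1 := by
        rw [Nat.card_Ioc, show 2 * m + 1 - m = m + 1 by omega, nsmul_eq_mul,
          ← ENNReal.ofReal_natCast, ← ENNReal.ofReal_mul (by positivity)]
        push_cast
        rw [mul_inv_cancel₀ (by positivity), ENNReal.ofReal_one]

lemma tsum_ofReal_inv_mul_volume_inter_Ioo_le {a : ℝ} (ha : 0 < a) (E : Set ℝ) :
    ∑' n : ℕ, ENNReal.ofReal (n : ℝ)⁻¹ * volume (E ∩ Ioo (n * a) (n * (2 * a))) ≤ volume E :=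
  calc _ = ∑' n : ℕ, ∫⁻ t in E,
        ENNReal.ofReal (n : ℝ)⁻¹ * (Ioo (n * a) (n * (2 * a))).indicator 1 t := by
        refine tsum_congr fun n => ?_
        rw [lintegral_const_mul _ (measurable_one.indicator measurableSet_Ioo),
          lintegral_indicator_one measurableSet_Ioo, Measure.restrict_apply measurableSet_Ioo,
          inter_comm]
    _ = ∫⁻ t in E, ∑' n : ℕ,
        ENNReal.ofReal (n : ℝ)⁻¹ * (Ioo (n * a) (n * (2 * a))).indicator 1 t :=
        (lintegral_tsum fun n =>
          ((measurable_one.indicator measurableSet_Ioo).const_mul _).aemeasurable).symm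
    _ ≤ ∫⁻ _ in E, 1 := lintegral_mono (tsum_ofReal_inv_mul_indicator_Ioo_le_one ha)
    _ = volume E := setLIntegral_one E

lemma volume_Ioo_inter_preimage_natCast_mul {n : ℕ} (hn : n ≠ 0) (a b : ℝ) (E : Set ℝ) :
    volume (Ioo a b ∩ (fun x => (n : ℝ) * x) ⁻¹' E) =
      ENNReal.ofReal (n : ℝ)⁻¹ * volume (E ∩ Ioo (n * a) (n * b)) := by
  have hn' : (0 : ℝ) < n := by positivity
  have hset : Ioo a b ∩ (fun x => (n : ℝ) * x) ⁻¹' E =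
      (fun x => (n : ℝ) * x) ⁻¹' (E ∩ Ioo (n * a) (n * b)) := by
    ext x
    simp [mul_lt_mul_iff_right₀ hn', and_comm]
  rw [hset, Real.volume_preimage_mul_left hn'.ne', abs_of_pos (inv_pos.2 hn')]

lemma ae_eventually_natCast_mul_notMem_of_mem_Ioo {E : Set ℝ} (hE : volume E ≠ ∞) (a : ℝ) :
    ∀ᵐ x, x ∈ Ioo a (2 * a) → ∀ᶠ n : ℕ in atTop, (n : ℝ) * x ∉ E := by
  rcases le_or_gt a 0 with ha | ha
  · exact Eventually.of_forall fun x hx => absurd hx.2 (by linarith [hx.1])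
  have hsum : ∑' n : ℕ, volume (Ioo a (2 * a) ∩ (fun x => ((n + 1 : ℕ) : ℝ) * x) ⁻¹' E) ≠ ∞ := by
    refine ne_top_of_le_ne_top hE (le_trans (le_of_eq ?_)
      ((ENNReal.tsum_comp_le_tsum_of_injective Nat.succ_injective _).trans
        (tsum_ofReal_inv_mul_volume_inter_Ioo_le ha E)))
    exact tsum_congr fun n => volume_Ioo_inter_preimage_natCast_mul n.succ_ne_zero _ _ E
  filter_upwards [ae_eventually_notMem hsum] with x hx hxI
  rw [← map_add_atTop_eq_nat 1]
  exact hx.mono fun n hn hnE => hn ⟨hxI, hnE⟩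

lemma ae_eventually_natCast_mul_notMem {E : Set ℝ} (hE : volume E ≠ ∞) :
    ∀ᵐ x ∂volume.restrict (Ioi 0), ∀ᶠ n : ℕ in atTop, (n : ℝ) * x ∉ E := by
  rw [ae_restrict_iff' measurableSet_Ioi]
  filter_upwards [ae_all_iff.2 fun q : ℚ => ae_eventually_natCast_mul_notMem_of_mem_Ioo hE q]
    with x hx hx0
  obtain ⟨q, hxq, hqx⟩ := exists_rat_btwn (half_lt_self (mem_Ioi.1 hx0))
  exact hx q ⟨hqx, by linarith⟩

theorem lesigne_lemma_general
    (g : ℝ → ℝ)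
    (hint : IntegrableOn g (Set.Ici 0)) :
    ∀ᵐ x ∂(volume.restrict (Set.Ioi (0:ℝ))),
      Tendsto (fun n : ℕ => g (n * x)) atTop (nhds 0) := by
  have hfin (k : ℕ) : volume ({t | 1 / ((k : ℝ) + 1) ≤ ‖g t‖} ∩ Ici 0) ≠ ∞ := by
    rw [← Measure.restrict_apply' measurableSet_Ici]
    exact (Integrable.measure_norm_ge_lt_top hint (by positivity)).ne
  filter_upwards [ae_all_iff.2 fun k => ae_eventually_natCast_mul_notMem (hfin k),
    ae_restrict_mem measurableSet_Ioi] with x hx hx0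
  refine Metric.nhds_basis_ball_inv_nat_succ.tendsto_right_iff.2 fun k _ => ?_
  filter_upwards [hx k] with n hn
  have hnx : (0 : ℝ) ≤ n * x := mul_nonneg n.cast_nonneg (mem_Ioi.1 hx0).le
  simpa [hnx] using hn

theorem lesigne_lemma
    (g : ℝ → ℝ) (hcont : Continuous g)
    (hpos : ∀ t ≥ (0:ℝ), 0 < g t)
    (hint : IntegrableOn g (Set.Ici 0)) :
    ∀ᵐ x ∂(volume.restrict (Set.Ioi (0:ℝ))),
      Tendsto (fun n : ℕ => g (n * x)) atTop (nhds 0) :=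
  lesigne_lemma_general g hint
end

section
/- Let κ : ℝ → ℝ be continuous with κ(s) ≤ K < 0 for all s ≥ 0 and some constant K. Then the function Λ(τ) := ∫_τ^∞ exp(∫_τ^ρ κ(s) ds) dρ is finite for all τ, satisfies Λ(τ) ≤ 1/(-K), and is differentiable with Λ'(τ) = -1 - κ(τ)Λ(τ). -/
open MeasureTheory Filter Set Real

/-! Writing `F` for a primitive of `κ`, the integrand factors as `exp (-F τ) * exp (F ρ)`,
so `Λ = exp (-F) * ∫_τ^∞ exp F` and the product rule gives `Λ' = -κ Λ - 1`. Integrability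
and the bound come from comparing the integrand with `exp (K (ρ - τ))`, whose integral over
`(τ, ∞)` is `1 / (-K)`. -/

theorem exp_mul_sub_eq_mul (K τ ρ : ℝ) : exp (K * (ρ - τ)) = exp (-(K * τ)) * exp (K * ρ) := by
  rw [← exp_add]; ring_nf

theorem integrableOn_exp_mul_sub_Ioi {K : ℝ} (hK : K < 0) (τ : ℝ) :
    IntegrableOn (fun ρ => exp (K * (ρ - τ))) (Ioi τ) := by
  simp_rw [exp_mul_sub_eq_mul]
  exact (integrableOn_exp_mul_Ioi hK τ).const_mul _

theorem integral_exp_mul_sub_Ioi {K : ℝ} (hK : K < 0) (τ : ℝ) :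
    ∫ ρ in Ioi τ, exp (K * (ρ - τ)) = 1 / (-K) := by
  simp only [exp_mul_sub_eq_mul, integral_const_mul, integral_exp_mul_Ioi hK, exp_neg]
  field_simp [(exp_pos (K * τ)).ne', hK.ne]

theorem intervalIntegral_le_mul_sub {κ : ℝ → ℝ} {K a b : ℝ}
    (hκ : IntervalIntegrable κ volume a b) (hab : a ≤ b) (hbd : ∀ s ∈ Icc a b, κ s ≤ K) :
    ∫ s in a..b, κ s ≤ K * (b - a) := by
  simpa [mul_comm] using intervalIntegral.integral_mono_on hab hκ intervalIntegrable_const hbd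

section

variable {κ : ℝ → ℝ} {K τ : ℝ}

theorem exp_intervalIntegral_le_exp_mul_sub (hκ : Continuous κ) (hbd : ∀ s ∈ Ici τ, κ s ≤ K)
    {ρ : ℝ} (hρ : τ ≤ ρ) : exp (∫ s in τ..ρ, κ s) ≤ exp (K * (ρ - τ)) :=
  exp_le_exp.2 <| intervalIntegral_le_mul_sub (hκ.intervalIntegrable τ ρ) hρ
    fun s hs => hbd s hs.1

theorem integrableOn_exp_intervalIntegral_Ioi (hK : K < 0) (hκ : Continuous κ)
    (hbd : ∀ s ∈ Ici τ, κ s ≤ K) :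
    IntegrableOn (fun ρ => exp (∫ s in τ..ρ, κ s)) (Ioi τ) := by
  have hcont : Continuous fun ρ => exp (∫ s in τ..ρ, κ s) :=
    continuous_exp.comp (intervalIntegral.continuous_primitive hκ.intervalIntegrable τ)
  refine (integrableOn_exp_mul_sub_Ioi hK τ).mono' hcont.aestronglyMeasurable.restrict ?_
  filter_upwards [ae_restrict_mem measurableSet_Ioi] with ρ hρ
  rw [norm_of_nonneg (exp_pos _).le]
  exact exp_intervalIntegral_le_exp_mul_sub hκ hbd hρ.le

theorem integral_exp_intervalIntegral_Ioi_le (hK : K < 0) (hκ : Continuous κ)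
    (hbd : ∀ s ∈ Ici τ, κ s ≤ K) :
    ∫ ρ in Ioi τ, exp (∫ s in τ..ρ, κ s) ≤ 1 / (-K) := by
  rw [← integral_exp_mul_sub_Ioi hK τ]
  exact setIntegral_mono_on (integrableOn_exp_intervalIntegral_Ioi hK hκ hbd)
    (integrableOn_exp_mul_sub_Ioi hK τ) measurableSet_Ioi
    fun ρ hρ => exp_intervalIntegral_le_exp_mul_sub hκ hbd (le_of_lt hρ)

end

theorem hasDerivAt_integral_Ioi {E : Type*} [NormedAddCommGroup E] [NormedSpace ℝ E]
    [CompleteSpace E] {g : ℝ → E} {a : ℝ} (hg : Continuous g) (hint : IntegrableOn g (Ioi a))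
    (t : ℝ) : HasDerivAt (fun u => ∫ x in Ioi u, g x) (-g t) t := by
  have hsplit :
      (fun u => ∫ x in Ioi u, g x) = fun u => (∫ x in u..a, g x) + ∫ x in Ioi a, g x :=
    funext fun u =>
      (intervalIntegral.integral_interval_add_Ioi' (hg.intervalIntegrable u a) hint).symm
  rw [hsplit]
  exact (intervalIntegral.integral_hasDerivAt_left (hg.intervalIntegrable t a)
    (hg.stronglyMeasurableAtFilter _ _) hg.continuousAt).add_const _

theorem exp_intervalIntegral_eq_mul {κ : ℝ → ℝ} (hκ : Continuous κ) (a t ρ : ℝ) :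
    exp (∫ s in t..ρ, κ s) = exp (-∫ s in a..t, κ s) * exp (∫ s in a..ρ, κ s) := by
  rw [← exp_add, ← intervalIntegral.integral_interval_sub_left (hκ.intervalIntegrable a ρ)
    (hκ.intervalIntegrable a t)]
  ring_nf

theorem hasDerivAt_integral_exp_intervalIntegral_Ioi {κ : ℝ → ℝ} {a : ℝ} (hκ : Continuous κ)
    (hint : IntegrableOn (fun ρ => exp (∫ s in a..ρ, κ s)) (Ioi a)) (τ : ℝ) :
    HasDerivAt (fun t => ∫ ρ in Ioi t, exp (∫ s in t..ρ, κ s))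
      (-1 - κ τ * ∫ ρ in Ioi τ, exp (∫ s in τ..ρ, κ s)) τ := by
  set F : ℝ → ℝ := fun t => ∫ s in a..t, κ s
  have hfactor : (fun t => ∫ ρ in Ioi t, exp (∫ s in t..ρ, κ s)) =
      fun t => exp (-F t) * ∫ ρ in Ioi t, exp (F ρ) := by
    funext t
    rw [← integral_const_mul]
    exact setIntegral_congr_fun measurableSet_Ioi fun ρ _ =>
      exp_intervalIntegral_eq_mul hκ a t ρ
  have hF : HasDerivAt F (κ τ) τ := (hκ.integral_hasStrictDerivAt a τ).hasDerivAt
  have hG : HasDerivAt (fun t => ∫ ρ in Ioi t, exp (F ρ)) (-exp (F τ)) τ :=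
    hasDerivAt_integral_Ioi
      (continuous_exp.comp (intervalIntegral.continuous_primitive hκ.intervalIntegrable a)) hint τ
  have hΛ := congrFun hfactor τ
  have hexp : exp (-F τ) * exp (F τ) = 1 := by rw [← exp_add, neg_add_cancel, exp_zero]
  rw [hfactor]
  refine (hF.neg.exp.mul hG).congr_deriv ?_
  simp only [Pi.neg_apply] at hΛ ⊢
  linear_combination κ τ * hΛ - hexp

theorem affine_length_finite_bounded_differentiable
    (κ : ℝ → ℝ) (K : ℝ) (hK : K < 0) (hcont : Continuous κ)
    (hbd : ∀ s, κ s ≤ K) :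
    ∀ τ : ℝ,
      IntegrableOn (fun ρ => Real.exp (∫ s in τ..ρ, κ s)) (Set.Ioi τ) ∧
      (∫ ρ in Set.Ioi τ, Real.exp (∫ s in τ..ρ, κ s)) ≤ 1 / (-K) ∧
      HasDerivAt (fun τ' => ∫ ρ in Set.Ioi τ', Real.exp (∫ s in τ'..ρ, κ s))
        (-1 - κ τ * (∫ ρ in Set.Ioi τ, Real.exp (∫ s in τ..ρ, κ s))) τ := by
  intro τ
  have hbdIci : ∀ t, ∀ s ∈ Ici t, κ s ≤ K := fun _ s _ => hbd s
  exact ⟨integrableOn_exp_intervalIntegral_Ioi hK hcont (hbdIci τ),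
    integral_exp_intervalIntegral_Ioi_le hK hcont (hbdIci τ),
    hasDerivAt_integral_exp_intervalIntegral_Ioi hcont
      (integrableOn_exp_intervalIntegral_Ioi hK hcont (hbdIci 0)) τ⟩
end

section
/- Let κ : ℝ → ℝ be continuous and bounded, and C > 0 a constant such that ∫₀^ρ κ(s) ds < 0 for all ρ ≥ C. Define e^{f(τ)} := ∫_τ^{τ+C} exp(∫_τ^ρ κ(s) ds) dρ. Then the function κ'(τ) := e^{f(τ)}(κ(τ) + f'(τ)) satisfies κ'(τ) = -1 + exp(∫_τ^{τ+C} κ(s) ds) < 0 for all τ. -/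
open intervalIntegral Real

/-!
Writing `G` for a primitive of `κ`, `e^{f(σ)} = ∫_σ^{σ+C} exp(∫_σ^ρ κ) dρ` factors as
`exp(-G σ) * ∫_σ^{σ+C} exp(G ρ) dρ`, so the product rule gives
`(e^f)' = -κ e^f + exp(∫_σ^{σ+C} κ) - 1`. Since `e^f (κ + f') = κ e^f + (e^f)'`, this is
`-1 + exp(∫_σ^{σ+C} κ)`, which is negative because `∫_σ^{σ+C} κ < 0`.
-/

theorem hasDerivAt_integral_add_const {E : Type*} [NormedAddCommGroup E] [NormedSpace ℝ E]
    [CompleteSpace E] {g : ℝ → E} (hg : Continuous g) (C σ : ℝ) :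
    HasDerivAt (fun σ => ∫ x in σ..σ + C, g x) (g (σ + C) - g σ) σ := by
  have hdiff : (fun σ => ∫ x in σ..σ + C, g x) =
      fun σ => (∫ x in 0..σ + C, g x) - ∫ x in 0..σ, g x :=
    funext fun σ =>
      (integral_interval_sub_left (hg.intervalIntegrable _ _) (hg.intervalIntegrable _ _)).symm
  rw [hdiff]
  exact ((hg.integral_hasStrictDerivAt 0 _).hasDerivAt.comp_add_const σ C).sub
    (hg.integral_hasStrictDerivAt 0 σ).hasDerivAt

theorem integral_exp_integral_eq_exp_neg_mul {κ : ℝ → ℝ} (hκ : Continuous κ) (σ C : ℝ) :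
    ∫ ρ in σ..σ + C, exp (∫ s in σ..ρ, κ s) =
      exp (-∫ s in 0..σ, κ s) * ∫ ρ in σ..σ + C, exp (∫ s in 0..ρ, κ s) := by
  rw [← integral_const_mul]
  refine integral_congr fun ρ _ => ?_
  rw [← integral_add_adjacent_intervals (hκ.intervalIntegrable 0 σ) (hκ.intervalIntegrable σ ρ),
    ← exp_add]
  ring_nf

theorem hasDerivAt_integral_exp_integral {κ : ℝ → ℝ} (hκ : Continuous κ) (C σ : ℝ) :
    HasDerivAt (fun σ => ∫ ρ in σ..σ + C, exp (∫ s in σ..ρ, κ s))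
      (-κ σ * (∫ ρ in σ..σ + C, exp (∫ s in σ..ρ, κ s)) + (exp (∫ s in σ..σ + C, κ s) - 1)) σ := by
  set G : ℝ → ℝ := fun x => ∫ s in 0..x, κ s
  have hG : ∀ x, HasDerivAt G (κ x) x := fun x => (hκ.integral_hasStrictDerivAt 0 x).hasDerivAt
  have hexpG : Continuous fun x => exp (G x) := (continuous_primitive hκ.intervalIntegrable 0).rexp
  have hexpNegG : HasDerivAt (fun x => exp (-G x)) (exp (-G σ) * -κ σ) σ := (hG σ).neg.exp
  have hprod : HasDerivAt (fun x => exp (-G x) * ∫ ρ in x..x + C, exp (G ρ))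
      (exp (-G σ) * -κ σ * (∫ ρ in σ..σ + C, exp (G ρ)) +
        exp (-G σ) * (exp (G (σ + C)) - exp (G σ))) σ :=
    hexpNegG.mul (hasDerivAt_integral_add_const hexpG C σ)
  convert hprod using 1
  · exact funext fun σ => integral_exp_integral_eq_exp_neg_mul hκ σ C
  · rw [integral_exp_integral_eq_exp_neg_mul hκ,
      ← integral_interval_sub_left (hκ.intervalIntegrable 0 (σ + C)) (hκ.intervalIntegrable 0 σ),
      exp_sub, exp_neg]
    field_simp
    ring

theorem integral_exp_integral_pos {κ : ℝ → ℝ} (hκ : Continuous κ) {C : ℝ} (hC : 0 < C) (σ : ℝ) :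
    0 < ∫ ρ in σ..σ + C, exp (∫ s in σ..ρ, κ s) :=
  intervalIntegral_pos_of_pos
    ((continuous_primitive hκ.intervalIntegrable σ).rexp.intervalIntegrable _ _)
    (fun _ => exp_pos _) (by linarith)

theorem exp_log_mul_add_deriv_log {F : ℝ → ℝ} {F' x : ℝ} (hF : HasDerivAt F F' x) (hpos : 0 < F x)
    (k : ℝ) : exp (log (F x)) * (k + deriv (fun y => log (F y)) x) = k * F x + F' := by
  rw [(hF.log hpos.ne').deriv, exp_log hpos]
  field_simp

theorem rescaled_surface_gravity_negative_general
    (κ : ℝ → ℝ) (C : ℝ) (hcont : Continuous κ)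
    (hC : 0 < C)
    (hneg : ∀ τ : ℝ, ∀ ρ ≥ C, (∫ s in τ..(τ + ρ), κ s) < 0) :
    ∀ τ : ℝ,
      Real.exp ((fun σ => Real.log (∫ ρ in σ..(σ + C), Real.exp (∫ s in σ..ρ, κ s))) τ)
          * (κ τ +
            deriv (fun σ => Real.log (∫ ρ in σ..(σ + C), Real.exp (∫ s in σ..ρ, κ s))) τ)
        = -1 + Real.exp (∫ s in τ..(τ + C), κ s) ∧
      -1 + Real.exp (∫ s in τ..(τ + C), κ s) < 0 := by
  intro τ
  refine ⟨?_, ?_⟩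
  · rw [exp_log_mul_add_deriv_log (hasDerivAt_integral_exp_integral hcont C τ)
      (integral_exp_integral_pos hcont hC τ)]
    ring
  · linarith [exp_lt_one_iff.2 (hneg τ C le_rfl)]

/-- Rescaled surface gravity is negative: if `κ` is continuous and bounded and
`∫_τ^{τ+ρ} κ < 0` for all `ρ ≥ C`, then with `e^{f(τ)} = ∫_τ^{τ+C} exp(∫_τ^ρ κ) dρ`,
the rescaled surface gravity `κ'(τ) = e^{f(τ)} (κ(τ) + f'(τ))` equals
`-1 + exp(∫_τ^{τ+C} κ) < 0`. -/
theorem rescaled_surface_gravity_negative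
    (κ : ℝ → ℝ) (K C : ℝ) (hcont : Continuous κ) (hbd : ∀ s, |κ s| ≤ K)
    (hC : 0 < C)
    (hneg : ∀ τ : ℝ, ∀ ρ ≥ C, (∫ s in τ..(τ + ρ), κ s) < 0) :
    ∀ τ : ℝ,
      Real.exp ((fun σ => Real.log (∫ ρ in σ..(σ + C), Real.exp (∫ s in σ..ρ, κ s))) τ)
          * (κ τ +
            deriv (fun σ => Real.log (∫ ρ in σ..(σ + C), Real.exp (∫ s in σ..ρ, κ s))) τ)
        = -1 + Real.exp (∫ s in τ..(τ + C), κ s) ∧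
      -1 + Real.exp (∫ s in τ..(τ + C), κ s) < 0 :=
  rescaled_surface_gravity_negative_general κ C hcont hC hneg
end

section
/- Let X be a future-directed causal vector and consider T(X) := (Ric(X,·) - (R/2 + Λ)g(X,·))^♯ on a Lorentzian manifold satisfying the dominant energy condition. If X is lightlike and Ric(X,X) = 0, then Ric(X,·) is proportional to g(X,·). -/
open RealInnerProductSpace

/-- Dominant energy condition forces `Ric(X,·) ∝ g(X,·)` for a lightlike `X` with
`Ric(X,X) = 0`.  The tangent space is modeled as `ℝ × ℝᵈ` with the Minkowski metric
`g((t,x),(s,y)) = -ts + ⟪x,y⟫`; future causal means `g(v,v) ≤ 0 ∧ 0 < v.1`, past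
causal means `g(v,v) ≤ 0 ∧ v.1 < 0`.  The dominant energy condition states that the
sharp of `Ric(v,·) - (R/2 + Λ) g(v,·)` is past causal (or zero) for every future
causal `v`. -/
theorem dec_ricci_proportional
    {d : ℕ}
    (g : (ℝ × EuclideanSpace ℝ (Fin d)) → (ℝ × EuclideanSpace ℝ (Fin d)) → ℝ)
    (hg : ∀ v w, g v w = -(v.1 * w.1) + ⟪v.2, w.2⟫)
    (Ric : LinearMap.BilinForm ℝ (ℝ × EuclideanSpace ℝ (Fin d)))
    (hRicSymm : ∀ v w, Ric v w = Ric w v)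
    (R0 Λ0 : ℝ)
    (hDEC : ∀ v, (g v v ≤ 0 ∧ 0 < v.1) →
      ∃ Tv, (∀ u, g Tv u = Ric v u - (R0 / 2 + Λ0) * g v u) ∧
        ((g Tv Tv ≤ 0 ∧ Tv.1 < 0) ∨ Tv = 0))
    (X : ℝ × EuclideanSpace ℝ (Fin d))
    (hXfut : g X X ≤ 0 ∧ 0 < X.1)
    (hXnull : g X X = 0)
    (hRicXX : Ric X X = 0) :
    ∃ lam : ℝ, ∀ u, Ric X u = lam * g X u := by
  obtain ⟨T, hT, hTcase⟩ := hDEC X hXfut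
  set c : ℝ := R0 / 2 + Λ0 with hc
  have ht : 0 < X.1 := hXfut.2
  rcases hTcase with ⟨hTcaus, hTs⟩ | hzero
  · -- T is past causal
    have hTX : g T X = 0 := by
      rw [hT X, hRicXX, hXnull]; ring
    -- norms
    have hXn : ‖X.2‖ = X.1 := by
      have h1 : ⟪X.2, X.2⟫ = X.1 * X.1 := by
        have := hg X X; rw [hXnull] at this; linarith
      have h2 : ‖X.2‖ ^ 2 = X.1 ^ 2 := by
        rw [← real_inner_self_eq_norm_sq, h1]; ring
      have h3 : (‖X.2‖ - X.1) * (‖X.2‖ + X.1) = 0 := by nlinarith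
      rcases mul_eq_zero.mp h3 with h | h
      · linarith
      · exfalso; nlinarith [norm_nonneg X.2]
    have hTn : ‖T.2‖ ≤ -T.1 := by
      have h1 : ⟪T.2, T.2⟫ ≤ T.1 * T.1 := by
        have := hg T T; nlinarith
      have h2 : ‖T.2‖ ^ 2 ≤ (-T.1) ^ 2 := by
        rw [← real_inner_self_eq_norm_sq]; nlinarith
      nlinarith [norm_nonneg T.2]
    have hinner : ⟪T.2, X.2⟫ = T.1 * X.1 := by
      have := hg T X; rw [hTX] at this; linarith
    -- Cauchy-Schwarz chain
    have hcs : ⟪-T.2, X.2⟫ ≤ ‖-T.2‖ * ‖X.2‖ := real_inner_le_norm _ _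
    have hval : ⟪-T.2, X.2⟫ = -T.1 * X.1 := by
      rw [inner_neg_left, hinner]; ring
    have hnormT : ‖T.2‖ = -T.1 := by
      rw [norm_neg, hXn, hval] at hcs
      nlinarith
    have heq : ⟪-T.2, X.2⟫ = ‖-T.2‖ * ‖X.2‖ := by
      rw [norm_neg, hnormT, hXn, hval]
    have hpar : ‖X.2‖ • (-T.2) = ‖-T.2‖ • X.2 :=
      (inner_eq_norm_mul_iff_real).mp heq
    have hT2 : T.2 = (T.1 / X.1) • X.2 := by
      rw [norm_neg, hnormT, hXn] at hpar
      have h5 : X.1 • T.2 = T.1 • X.2 := by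
        have h6 : -(X.1 • T.2) = -(T.1 • X.2) := by
          rw [← smul_neg, ← neg_smul]; exact hpar
        exact neg_inj.mp h6
      have hx : X.1 ≠ 0 := ne_of_gt ht
      apply smul_right_injective (EuclideanSpace ℝ (Fin d)) hx
      show X.1 • T.2 = X.1 • ((T.1 / X.1) • X.2)
      rw [h5, smul_smul]
      congr 1
      field_simp
    refine ⟨T.1 / X.1 + c, fun u => ?_⟩
    have hTu := hT u
    have hgTu : g T u = (T.1 / X.1) * g X u := by
      rw [hg T u, hg X u, hT2, real_inner_smul_left]
      have hT1 : T.1 = (T.1 / X.1) * X.1 := by field_simp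
      linear_combination (-u.1) * hT1
    rw [hgTu] at hTu
    rw [add_mul]
    linarith
  · refine ⟨c, fun u => ?_⟩
    have hTu := hT u
    rw [hzero] at hTu
    have : g 0 u = 0 := by
      rw [hg]
      simp
    rw [this] at hTu
    linarith
end
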